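/- arXiv:0807.2924 — 2 statements merged into one kernel-verified Lean document; each statement's English description precedes it below -/
import Mathlib

section
/- Let φ be an additive real-valued weight on C (φ(α ≫ β) = φ(α) + φ(β) for all composable morphisms), and define the linear operator D on H_γ by (D ξ)(α) = φ(α)·ξ(α). Then the commutators of D with the creation and annihilation operators are scalar multiples of those operators: D ∘ A_M − A_M ∘ D = φ(M)·A_M and D ∘ A_M^* − A_M^* ∘ D = −φ(M)·A_M^* as linear operators on H_γ; in particular, ‖(D ∘ A_M − A_M ∘ D) ξ‖ ≤ |φ(M)|·‖ξ‖ for all ξ ∈ H_γ, with ‖·‖ the norm induced by the inner product, so D has bounded commutators with A_M and A_M^*. -/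
open CategoryTheory
open scoped Classical

/-- The set of morphisms of `C` with target `γ₀`. -/
def MorTo (C : Type*) [Category C] (γ₀ : C) := Σ X : C, X ⟶ γ₀

/-- The annihilation operator `A_M` on `H_γ₀` associated to a morphism `M : G ⟶ G'`. -/
noncomputable def annih {C : Type*} [Category C] {γ₀ G G' : C}
    (M : G ⟶ G') (ξ : MorTo C γ₀ → ℂ) : MorTo C γ₀ → ℂ :=
  fun α => if h : ∃ β : G' ⟶ γ₀, α = ⟨G, M ≫ β⟩ then ξ ⟨G', h.choose⟩ else 0

/-- The creation operator `A_M^*` on `H_γ₀`. -/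
noncomputable def creat {C : Type*} [Category C] {γ₀ G G' : C}
    (M : G ⟶ G') (ξ : MorTo C γ₀ → ℂ) : MorTo C γ₀ → ℂ :=
  fun β => if h : ∃ b : G' ⟶ γ₀, β = ⟨G', b⟩ then ξ ⟨G, M ≫ h.choose⟩ else 0

/-- The diagonal operator `(D ξ)(α) = φ(α) · ξ(α)` on `H_γ₀` associated to an additive
weight `φ`. -/
noncomputable def Dop {C : Type*} [Category C] {γ₀ : C}
    (φ : ∀ X Y : C, (X ⟶ Y) → ℝ) (ξ : MorTo C γ₀ → ℂ) : MorTo C γ₀ → ℂ :=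
  fun α => ((φ α.1 γ₀ α.2 : ℝ) : ℂ) * ξ α

/-- The norm on `H_γ₀` induced by the inner product `⟨ξ, ξ'⟩ = Σ_α conj(ξ(α)) ξ'(α)`. -/
noncomputable def normH {C : Type*} [Category C] {γ₀ : C}
    (ξ : MorTo C γ₀ → ℂ) : ℝ :=
  Real.sqrt (∑ᶠ α : MorTo C γ₀, Complex.normSq (ξ α))

/-! The diagonal operator `D` multiplies the coefficient at `α` by `φ(α)`, and `A_M`, `A_M^*`
move coefficients between `β` and `M ≫ β`. Additivity `φ(M ≫ β) = φ(M) + φ(β)` makes the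
commutators scalar multiples `±φ(M)` of `A_M`, `A_M^*`, and both operators are contractions on
`H_γ` because `β ↦ M ≫ β` is injective when `M` can be cancelled on the left. -/

open Function Set

section Finsum

variable {ι α M : Type*}

theorem finsum_eq_finsum_comp_of_support_subset_range [AddCommMonoid M] {f : α → M}
    {j : ι → α} (hj : Injective j) (hf : support f ⊆ range j) :
    ∑ᶠ a, f a = ∑ᶠ i, f (j i) := by
  rw [← finsum_mem_range hj, ← finsum_mem_univ]
  exact finsum_mem_inter_support_eq' f _ _ fun a ha => by simp [hf ha]

theorem finsum_comp_le_finsum [AddCommMonoid M] [PartialOrder M] [IsOrderedAddMonoid M]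
    {f : α → M} (hf₀ : 0 ≤ f) (hf : f.HasFiniteSupport) {k : ι → α} (hk : Injective k) :
    ∑ᶠ i, f (k i) ≤ ∑ᶠ a, f a := by
  rw [← finsum_mem_range hk, finsum_mem_def]
  exact finsum_le_finsum' (hf.subset (by rw [support_indicator]; exact inter_subset_right)) hf
    (indicator_le_self' fun a _ => hf₀ a)

end Finsum

namespace MorTo

variable {C : Type*} [Category C] {γ₀ G G' : C}

def comp (M : G ⟶ G') (β : G' ⟶ γ₀) : MorTo C γ₀ := ⟨G, M ≫ β⟩

theorem comp_injective (M : G ⟶ G') [Epi M] : Function.Injective (comp (γ₀ := γ₀) M) :=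
  fun _ _ h => cancel_epi M |>.mp (eq_of_heq (Sigma.mk.inj h).2)

end MorTo

section Operators

variable {C : Type*} [Category C] {γ₀ G G' : C} (M : G ⟶ G')

theorem annih_apply_comp [Epi M] (ξ : MorTo C γ₀ → ℂ) (β : G' ⟶ γ₀) :
    annih M ξ (MorTo.comp M β) = ξ ⟨G', β⟩ := by
  have h : ∃ b : G' ⟶ γ₀, MorTo.comp M β = MorTo.comp M b := ⟨β, rfl⟩
  refine (dif_pos h).trans ?_
  exact congrArg (fun b => ξ ⟨G', b⟩) (MorTo.comp_injective M h.choose_spec).symm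

theorem annih_apply_of_notMem_range (ξ : MorTo C γ₀ → ℂ) {α : MorTo C γ₀}
    (hα : α ∉ range (MorTo.comp M)) : annih M ξ α = 0 :=
  dif_neg fun ⟨β, hβ⟩ => hα ⟨β, hβ.symm⟩

theorem support_annih_subset (ξ : MorTo C γ₀ → ℂ) :
    support (annih M ξ) ⊆ range (MorTo.comp M) :=
  fun _ hα => by_contra fun h => hα (annih_apply_of_notMem_range M ξ h)

theorem creat_apply_mk (ξ : MorTo C γ₀ → ℂ) (b : G' ⟶ γ₀) :
    creat M ξ ⟨G', b⟩ = ξ (MorTo.comp M b) := by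
  have h : ∃ c : G' ⟶ γ₀, (⟨G', b⟩ : MorTo C γ₀) = ⟨G', c⟩ := ⟨b, rfl⟩
  refine (dif_pos h).trans ?_
  exact congrArg (fun c => ξ (MorTo.comp M c)) (sigma_mk_injective h.choose_spec).symm

theorem creat_apply_of_notMem_range (ξ : MorTo C γ₀ → ℂ) {β : MorTo C γ₀}
    (hβ : β ∉ range (Sigma.mk G')) : creat M ξ β = 0 :=
  dif_neg fun ⟨b, hb⟩ => hβ ⟨b, hb.symm⟩

theorem support_creat_subset (ξ : MorTo C γ₀ → ℂ) :
    support (creat M ξ) ⊆ range (Sigma.mk G') :=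
  fun _ hβ => by_contra fun h => hβ (creat_apply_of_notMem_range M ξ h)

variable {φ : ∀ X Y : C, (X ⟶ Y) → ℝ}
  (hadd : ∀ (X Y Z : C) (a : X ⟶ Y) (b : Y ⟶ Z), φ X Z (a ≫ b) = φ X Y a + φ Y Z b)
include hadd

theorem Dop_annih_sub_annih_Dop [Epi M] (ξ : MorTo C γ₀ → ℂ) :
    (fun α => Dop φ (annih M ξ) α - annih M (Dop φ ξ) α) =
      ((φ G G' M : ℝ) : ℂ) • annih M ξ := by
  funext α
  show _ = ((φ G G' M : ℝ) : ℂ) * annih M ξ α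
  by_cases hα : α ∈ range (MorTo.comp M)
  · obtain ⟨β, rfl⟩ := hα
    simp only [Dop, annih_apply_comp]
    simp only [MorTo.comp, hadd]
    push_cast
    ring
  · simp [Dop, annih_apply_of_notMem_range M _ hα]

theorem Dop_creat_sub_creat_Dop (ξ : MorTo C γ₀ → ℂ) :
    (fun β => Dop φ (creat M ξ) β - creat M (Dop φ ξ) β) =
      (-((φ G G' M : ℝ) : ℂ)) • creat M ξ := by
  funext β
  show _ = -((φ G G' M : ℝ) : ℂ) * creat M ξ β
  by_cases hβ : β ∈ range (Sigma.mk G')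
  · obtain ⟨b, rfl⟩ := hβ
    simp only [Dop, creat_apply_mk, MorTo.comp, hadd]
    push_cast
    ring
  · simp [Dop, creat_apply_of_notMem_range M _ hβ]

end Operators

section Norm

variable {C : Type*} [Category C] {γ₀ : C}

theorem normH_ofReal_smul (c : ℝ) (ξ : MorTo C γ₀ → ℂ) :
    normH ((c : ℂ) • ξ) = |c| * normH ξ := by
  simp only [normH, Pi.smul_apply, smul_eq_mul, Complex.normSq_mul, Complex.normSq_ofReal]
  rw [← mul_finsum, Real.sqrt_mul (mul_self_nonneg c), Real.sqrt_mul_self_eq_abs]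

theorem normH_le_of_comp_eq {ι : Type*} {ξ η : MorTo C γ₀ → ℂ} (hξ : (support ξ).Finite)
    {j k : ι → MorTo C γ₀} (hj : Injective j) (hk : Injective k) (hη : support η ⊆ range j)
    (hjk : ∀ i, η (j i) = ξ (k i)) : normH η ≤ normH ξ := by
  refine Real.sqrt_le_sqrt ?_
  calc ∑ᶠ a, Complex.normSq (η a)
      = ∑ᶠ i, Complex.normSq (η (j i)) :=
        finsum_eq_finsum_comp_of_support_subset_range hj
          ((support_comp_subset (map_zero _) η).trans hη)
    _ = ∑ᶠ i, Complex.normSq (ξ (k i)) := by simp only [hjk]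
    _ ≤ ∑ᶠ a, Complex.normSq (ξ a) :=
        finsum_comp_le_finsum (fun _ => Complex.normSq_nonneg _)
          (hξ.subset (support_comp_subset (map_zero _) ξ)) hk

variable {G G' : C} (M : G ⟶ G') [Epi M] {ξ : MorTo C γ₀ → ℂ}

theorem normH_annih_le (hξ : (support ξ).Finite) : normH (annih M ξ) ≤ normH ξ :=
  normH_le_of_comp_eq hξ (MorTo.comp_injective M) sigma_mk_injective
    (support_annih_subset M ξ) (annih_apply_comp M ξ)

theorem normH_creat_le (hξ : (support ξ).Finite) : normH (creat M ξ) ≤ normH ξ :=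
  normH_le_of_comp_eq hξ sigma_mk_injective (MorTo.comp_injective M)
    (support_creat_subset M ξ) (creat_apply_mk M ξ)

end Norm

/-- For an additive real-valued weight `φ` on a left-cancellative small category, the
commutators of the diagonal operator `D` with the creation and annihilation operators are
scalar multiples of those operators: `[D, A_M] = φ(M) · A_M` and
`[D, A_M^*] = -φ(M) · A_M^*`; in particular `‖[D, A_M] ξ‖ ≤ |φ(M)| ‖ξ‖`, so `D` has
bounded commutators with `A_M` and `A_M^*`. -/
theorem Dop_bounded_commutators
    {C : Type*} [Category C]
    (hcancel : ∀ (X Y Z : C) (m : X ⟶ Y) (a b : Y ⟶ Z), m ≫ a = m ≫ b → a = b)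
    (φ : ∀ X Y : C, (X ⟶ Y) → ℝ)
    (hadd : ∀ (X Y Z : C) (a : X ⟶ Y) (b : Y ⟶ Z),
      φ X Z (a ≫ b) = φ X Y a + φ Y Z b)
    (γ₀ G G' : C) (M : G ⟶ G') :
    (∀ ξ : MorTo C γ₀ → ℂ,
      (fun α => Dop φ (annih M ξ) α - annih M (Dop φ ξ) α) =
        ((φ G G' M : ℝ) : ℂ) • annih M ξ) ∧
    (∀ ξ : MorTo C γ₀ → ℂ,
      (fun β => Dop φ (creat M ξ) β - creat M (Dop φ ξ) β) =
        (-((φ G G' M : ℝ) : ℂ)) • creat M ξ) ∧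
    (∀ ξ : MorTo C γ₀ → ℂ, (Function.support ξ).Finite →
      normH (fun α => Dop φ (annih M ξ) α - annih M (Dop φ ξ) α) ≤
        |φ G G' M| * normH ξ) ∧
    (∀ ξ : MorTo C γ₀ → ℂ, (Function.support ξ).Finite →
      normH (fun β => Dop φ (creat M ξ) β - creat M (Dop φ ξ) β) ≤
        |φ G G' M| * normH ξ) := by
  -- with diagrammatic composition, left cancellation by `M` is `Epi M`
  have : Epi M := ⟨fun a b h => hcancel _ _ _ M a b h⟩
  refine ⟨Dop_annih_sub_annih_Dop M hadd, Dop_creat_sub_creat_Dop M hadd,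
    fun ξ hξ => ?_, fun ξ hξ => ?_⟩
  · rw [Dop_annih_sub_annih_Dop M hadd, normH_ofReal_smul]
    exact mul_le_mul_of_nonneg_left (normH_annih_le M hξ) (abs_nonneg _)
  · rw [Dop_creat_sub_creat_Dop M hadd, ← Complex.ofReal_neg, normH_ofReal_smul, abs_neg]
    exact mul_le_mul_of_nonneg_left (normH_creat_le M hξ) (abs_nonneg _)
end

section
/- Let χ be a real-valued function on the morphisms of C and χ₀ a real-valued function on the objects of C satisfying the inclusion–exclusion gluing rule χ(α ≫ β) = χ(α) + χ(β) − χ₀(Y) for all morphisms α : X ⟶ Y and β : Y ⟶ Z. Define σ_t : ℂ[C] → ℂ[C] for t ∈ ℝ by σ_t(f)(α) = exp(i·t·(χ(α) − χ₀(Z)))·f(α) for α : X ⟶ Z. Then each σ_t is a ℂ-algebra automorphism of ℂ[C] (σ_t(f₁ * f₂) = σ_t(f₁) * σ_t(f₂)), with σ_0 = id and σ_{t+s} = σ_t ∘ σ_s; i.e., any numerical invariant satisfying an inclusion–exclusion principle under gluing defines a time evolution on the convolution algebra. -/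
/-! The factor `exp(i t (χ(α) - χ₀(Z)))` is multiplicative along composition: for `α : X ⟶ Y`,
`β : Y ⟶ Z` the gluing rule gives `χ(α ≫ β) - χ₀(Z) = (χ(α) - χ₀(Y)) + (χ(β) - χ₀(Z))`.
Pointwise multiplication by a function that is multiplicative along composition commutes with
convolution, and the group law in `t` is the functional equation of `exp`. -/

open CategoryTheory
open scoped Classical

/-- The set of all morphisms of a small category `C`. -/
def Mor (C : Type*) [Category C] := Σ (X : C) (Y : C), X ⟶ Y

/-- `CompTo α β γ` holds when `α` and `β` are composable morphisms and `α ≫ β = γ`. -/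
def CompTo {C : Type*} [Category C] (α β γ : Mor C) : Prop :=
  ∃ (X Y Z : C) (a : X ⟶ Y) (b : Y ⟶ Z),
    α = ⟨X, Y, a⟩ ∧ β = ⟨Y, Z, b⟩ ∧ γ = ⟨X, Z, a ≫ b⟩

/-- The convolution product on `ℂ[C]`. -/
noncomputable def conv {C : Type*} [Category C] (f₁ f₂ : Mor C → ℂ) : Mor C → ℂ :=
  fun γ => ∑ᶠ p : Mor C × Mor C,
    if CompTo p.1 p.2 γ then f₁ p.1 * f₂ p.2 else 0

/-- The evolution `σ_t(f)(α) = exp(i t (χ(α) - χ₀(target α))) · f(α)` associated to a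
numerical invariant `χ` of morphisms and `χ₀` of objects. -/
noncomputable def sigmaChi {C : Type*} [Category C]
    (χ : ∀ X Y : C, (X ⟶ Y) → ℝ) (χ₀ : C → ℝ) (t : ℝ) (f : Mor C → ℂ) : Mor C → ℂ :=
  fun α => Complex.exp (Complex.I * (t : ℂ) *
    ((χ α.1 α.2.1 α.2.2 - χ₀ α.2.1 : ℝ) : ℂ)) * f α

section Convolution

variable {C : Type*} [Category C]

theorem conv_mul_mul_of_compTo {φ : Mor C → ℂ}
    (hφ : ∀ α β γ : Mor C, CompTo α β γ → φ γ = φ α * φ β) (f₁ f₂ : Mor C → ℂ) :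
    conv (φ * f₁) (φ * f₂) = φ * conv f₁ f₂ := by
  funext γ
  simp only [conv, Pi.mul_apply, mul_finsum]
  refine finsum_congr fun p => ?_
  split_ifs with h
  · rw [hφ p.1 p.2 γ h]
    ring
  · rw [mul_zero]

end Convolution

section Evolution

variable {C : Type*} [Category C] (χ : ∀ X Y : C, (X ⟶ Y) → ℝ) (χ₀ : C → ℝ)

noncomputable def evolutionPhase (t : ℝ) (α : Mor C) : ℂ :=
  Complex.exp (Complex.I * (t : ℂ) * ((χ α.1 α.2.1 α.2.2 - χ₀ α.2.1 : ℝ) : ℂ))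

theorem sigmaChi_eq_mul (t : ℝ) (f : Mor C → ℂ) :
    sigmaChi χ χ₀ t f = evolutionPhase χ χ₀ t * f :=
  rfl

theorem evolutionPhase_zero : evolutionPhase χ χ₀ 0 = 1 := by
  funext α
  simp [evolutionPhase]

theorem evolutionPhase_add (t s : ℝ) :
    evolutionPhase χ χ₀ (t + s) = evolutionPhase χ χ₀ t * evolutionPhase χ χ₀ s := by
  funext α
  simp only [evolutionPhase, Pi.mul_apply, ← Complex.exp_add]
  push_cast
  ring_nf

variable {χ χ₀}

theorem evolutionPhase_of_compTo
    (hglue : ∀ (X Y Z : C) (a : X ⟶ Y) (b : Y ⟶ Z),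
      χ X Z (a ≫ b) = χ X Y a + χ Y Z b - χ₀ Y)
    (t : ℝ) {α β γ : Mor C} (h : CompTo α β γ) :
    evolutionPhase χ χ₀ t γ = evolutionPhase χ χ₀ t α * evolutionPhase χ χ₀ t β := by
  obtain ⟨X, Y, Z, a, b, rfl, rfl, rfl⟩ := h
  simp only [evolutionPhase, ← Complex.exp_add, hglue]
  push_cast
  ring_nf

end Evolution

/-- A numerical invariant `χ` satisfying the inclusion–exclusion gluing rule
`χ(α ≫ β) = χ(α) + χ(β) - χ₀(Y)` defines a time evolution
`σ_t(f)(α) = exp(i t (χ(α) - χ₀(Z))) f(α)` on the convolution algebra `ℂ[C]`: each `σ_t`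
is a ℂ-algebra automorphism and `t ↦ σ_t` is a one-parameter group. -/
theorem inclusion_exclusion_time_evolution
    {C : Type*} [Category C]
    (χ : ∀ X Y : C, (X ⟶ Y) → ℝ) (χ₀ : C → ℝ)
    (hglue : ∀ (X Y Z : C) (a : X ⟶ Y) (b : Y ⟶ Z),
      χ X Z (a ≫ b) = χ X Y a + χ Y Z b - χ₀ Y) :
    (∀ (t : ℝ) (a b : ℂ) (f₁ f₂ : Mor C → ℂ),
      sigmaChi χ χ₀ t (a • f₁ + b • f₂) =
        a • sigmaChi χ χ₀ t f₁ + b • sigmaChi χ χ₀ t f₂) ∧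
    (∀ (t : ℝ) (f₁ f₂ : Mor C → ℂ),
      (Function.support f₁).Finite → (Function.support f₂).Finite →
      sigmaChi χ χ₀ t (conv f₁ f₂) = conv (sigmaChi χ χ₀ t f₁) (sigmaChi χ χ₀ t f₂)) ∧
    (sigmaChi χ χ₀ 0 = (id : (Mor C → ℂ) → (Mor C → ℂ))) ∧
    (∀ t s : ℝ, sigmaChi χ χ₀ (t + s) = sigmaChi χ χ₀ t ∘ sigmaChi χ χ₀ s) := by
  refine ⟨fun t a b f₁ f₂ => ?_, fun t f₁ f₂ _ _ => ?_, ?_, fun t s => ?_⟩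
  · simp only [sigmaChi_eq_mul, mul_add, mul_smul_comm]
  · simp only [sigmaChi_eq_mul]
    exact (conv_mul_mul_of_compTo
      (fun _ _ _ => evolutionPhase_of_compTo hglue t) f₁ f₂).symm
  · funext f
    simp [sigmaChi_eq_mul, evolutionPhase_zero]
  · funext f
    simp [sigmaChi_eq_mul, evolutionPhase_add, mul_assoc]
end
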